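/- arXiv:1011.6499 — 5 statements merged into one kernel-verified Lean document; each statement's English description precedes it below -/
import Mathlib

section
/- Let g : ℝ → ℝ be continuous and satisfy |g(ξ)| ≤ C₀(1 + |ξ|)^p for some constants C₀ > 0 and p ≥ 0. Then for every μ ∈ ℝ, the integral ∫_ℝ β·e^{β(ξ−μ)}·(e^{β(ξ−μ)} + 1)⁻²·g(ξ) dξ converges to g(μ) as β → ∞. -/
open Filter Real MeasureTheory Asymptotics Topology

/-! Substituting `v = β (ξ - μ)` turns the integral into `∫ φ v * g (μ + v / β) dv`, where
`φ v = eᵛ (eᵛ + 1)⁻²` is the derivative of the logistic sigmoid, hence a probability density, and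
`φ v ≤ exp (-|v|)`. For `β ≥ 1` the integrand is dominated by `C₀ (1 + |μ|)ᵖ (1 + |v|)ᵖ φ v`,
which is integrable, so dominated convergence gives the limit `g μ * ∫ φ = g μ`. -/

noncomputable def fermiDiracKernel (u : ℝ) : ℝ := exp u * ((exp u + 1) ^ 2)⁻¹

lemma fermiDiracKernel_nonneg (u : ℝ) : 0 ≤ fermiDiracKernel u := by
  unfold fermiDiracKernel; positivity

lemma continuous_fermiDiracKernel : Continuous fermiDiracKernel := by
  unfold fermiDiracKernel
  exact continuous_exp.mul <| ((continuous_exp.add continuous_const).pow 2).inv₀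
    fun u => (by positivity : (exp u + 1) ^ 2 ≠ 0)

lemma fermiDiracKernel_neg (u : ℝ) : fermiDiracKernel (-u) = fermiDiracKernel u := by
  unfold fermiDiracKernel
  rw [exp_neg]
  field_simp
  ring

lemma fermiDiracKernel_le_exp_neg_abs (u : ℝ) : fermiDiracKernel u ≤ exp (-|u|) := by
  have hle_exp (v : ℝ) : fermiDiracKernel v ≤ exp v := by
    unfold fermiDiracKernel
    refine mul_le_of_le_one_right (exp_pos v).le (inv_le_one_of_one_le₀ ?_)
    nlinarith [exp_pos v]
  rcases abs_choice u with h | h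
  · rw [h, ← fermiDiracKernel_neg]; exact hle_exp _
  · rw [h, neg_neg]; exact hle_exp u

lemma hasDerivAt_sigmoid_fermiDiracKernel (u : ℝ) :
    HasDerivAt sigmoid (fermiDiracKernel u) u := by
  convert hasDerivAt_sigmoid u using 1
  unfold fermiDiracKernel sigmoid
  rw [exp_neg]
  field_simp
  ring

lemma isBigO_fermiDiracKernel_cocompact (p : ℝ) :
    (fun v => (1 + |v|) ^ p * fermiDiracKernel v) =O[cocompact ℝ]
      fun v => (1 + |v|) ^ (-2 : ℝ) := by
  have hdecay : (fun t : ℝ => t ^ p * exp (-t)) =o[atTop] fun t => t ^ (-2 : ℝ) := by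
    have h := (isBigO_refl (fun t : ℝ => t ^ p) atTop).mul_isLittleO
      (isLittleO_exp_neg_mul_rpow_atTop one_pos (-(p + 2)))
    refine (h.congr_left fun t => by rw [neg_one_mul]).congr' EventuallyEq.rfl ?_
    filter_upwards [eventually_gt_atTop 0] with t ht
    rw [← rpow_add ht]; ring_nf
  have hnorm : Tendsto (fun v : ℝ => 1 + |v|) (cocompact ℝ) atTop :=
    tendsto_atTop_add_const_left _ 1 tendsto_norm_cocompact_atTop
  refine IsBigO.trans ?_ (hdecay.comp_tendsto hnorm).isBigO
  refine IsBigO.of_bound (exp 1) (Eventually.of_forall fun v => ?_)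
  have hK := fermiDiracKernel_le_exp_neg_abs v
  simp only [Function.comp_apply, norm_mul, Real.norm_eq_abs, abs_of_nonneg
    (fermiDiracKernel_nonneg v), abs_of_nonneg (exp_pos _).le,
    abs_of_nonneg (rpow_nonneg (by positivity : (0 : ℝ) ≤ 1 + |v|) p)]
  calc (1 + |v|) ^ p * fermiDiracKernel v ≤ (1 + |v|) ^ p * exp (-|v|) := by gcongr
    _ = exp 1 * ((1 + |v|) ^ p * exp (-(1 + |v|))) := by
      rw [mul_left_comm, ← exp_add]; ring_nf

lemma integrable_one_add_abs_rpow_mul_fermiDiracKernel (p : ℝ) :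
    Integrable fun v => (1 + |v|) ^ p * fermiDiracKernel v := by
  refine LocallyIntegrable.integrable_of_isBigO_cocompact ?_
    (isBigO_fermiDiracKernel_cocompact p) ?_
  · refine (Continuous.mul ?_ continuous_fermiDiracKernel).locallyIntegrable
    exact (continuous_const.add continuous_abs).rpow_const fun v => Or.inl (by positivity : 1 + |v| ≠ 0)
  · exact (integrable_one_add_norm (E := ℝ) (by simp)).integrableAtFilter _

lemma integrable_fermiDiracKernel : Integrable fermiDiracKernel := by
  simpa using integrable_one_add_abs_rpow_mul_fermiDiracKernel 0

lemma integral_fermiDiracKernel : ∫ u, fermiDiracKernel u = 1 := by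
  rw [integral_of_hasDerivAt_of_tendsto hasDerivAt_sigmoid_fermiDiracKernel
    integrable_fermiDiracKernel tendsto_sigmoid_atBot tendsto_sigmoid_atTop, sub_zero]

lemma one_add_abs_add_le_mul (a b : ℝ) : 1 + |a + b| ≤ (1 + |a|) * (1 + |b|) := by
  nlinarith [abs_add_le a b, abs_nonneg a, abs_nonneg b, mul_nonneg (abs_nonneg a) (abs_nonneg b)]

lemma one_add_abs_add_div_rpow_le {p β : ℝ} (hp : 0 ≤ p) (hβ : 1 ≤ β) (x v : ℝ) :
    (1 + |x + v / β|) ^ p ≤ (1 + |x|) ^ p * (1 + |v|) ^ p := by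
  have hdiv : |v / β| ≤ |v| := by
    rw [abs_div, abs_of_pos (show 0 < β by linarith)]
    exact div_le_self (abs_nonneg v) hβ
  rw [← mul_rpow (by positivity) (by positivity)]
  refine rpow_le_rpow (by positivity) ((one_add_abs_add_le_mul x _).trans ?_) hp
  gcongr

theorem tendsto_integral_mul_comp_add_div {K g : ℝ → ℝ} {C p : ℝ} (hp : 0 ≤ p)
    (hKm : AEStronglyMeasurable K) (hK : Integrable fun v => (1 + |v|) ^ p * K v)
    (hg : Continuous g) (hgrowth : ∀ x, |g x| ≤ C * (1 + |x|) ^ p) (x : ℝ) :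
    Tendsto (fun β => ∫ v, K v * g (x + v / β)) atTop (𝓝 ((∫ v, K v) * g x)) := by
  have hC : 0 ≤ C := nonneg_of_mul_nonneg_left ((abs_nonneg _).trans (hgrowth 0)) (by positivity)
  rw [← integral_mul_const]
  refine tendsto_integral_filter_of_dominated_convergence
    (fun v => C * (1 + |x|) ^ p * ‖(1 + |v|) ^ p * K v‖) ?_ ?_ (hK.norm.const_mul _) ?_
  · exact Eventually.of_forall fun β => hKm.mul (by fun_prop)
  · filter_upwards [eventually_ge_atTop 1] with β hβ
    refine Eventually.of_forall fun v => ?_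
    calc ‖K v * g (x + v / β)‖ = |K v| * |g (x + v / β)| := by
          rw [norm_mul, Real.norm_eq_abs, Real.norm_eq_abs]
      _ ≤ |K v| * (C * ((1 + |x|) ^ p * (1 + |v|) ^ p)) := by
          gcongr
          exact (hgrowth _).trans (by gcongr; exact one_add_abs_add_div_rpow_le hp hβ x v)
      _ = C * (1 + |x|) ^ p * ‖(1 + |v|) ^ p * K v‖ := by
          rw [norm_mul, norm_of_nonneg (by positivity), Real.norm_eq_abs]; ring
  · refine Eventually.of_forall fun v => ((hg.tendsto x).comp ?_).const_mul (K v)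
    simpa using (tendsto_const_nhds.div_atTop tendsto_id).const_add x

lemma integral_mul_comp_mul_sub_eq {β : ℝ} (hβ : 0 < β) (K g : ℝ → ℝ) (x : ℝ) :
    ∫ ξ, β * K (β * (ξ - x)) * g ξ = ∫ v, K v * g (x + v / β) := by
  set F : ℝ → ℝ := fun v => β * (K v * g (x + v / β))
  have hF (ξ : ℝ) : β * K (β * (ξ - x)) * g ξ = F (β * (ξ - x)) := by
    simp only [F]
    rw [mul_div_cancel_left₀ _ hβ.ne', add_sub_cancel, mul_assoc]
  calc ∫ ξ, β * K (β * (ξ - x)) * g ξ = ∫ ξ, F (β * ξ) := by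
        simp_rw [hF]; exact integral_sub_right_eq_self (fun ξ => F (β * ξ)) x
    _ = |β⁻¹| • ∫ v, F v := Measure.integral_comp_mul_left F β
    _ = ∫ v, K v * g (x + v / β) := by
        rw [integral_const_mul, abs_of_pos (inv_pos.mpr hβ), smul_eq_mul, inv_mul_cancel_left₀ hβ.ne']

theorem stmt_4_general (g : ℝ → ℝ) (hg : Continuous g) (C₀ p : ℝ)
    (hp : 0 ≤ p) (hgrowth : ∀ ξ : ℝ, |g ξ| ≤ C₀ * (1 + |ξ|) ^ p) (μ : ℝ) :
    Tendsto (fun β : ℝ =>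
        ∫ ξ : ℝ, β * Real.exp (β * (ξ - μ)) * ((Real.exp (β * (ξ - μ)) + 1) ^ 2)⁻¹ * g ξ)
      atTop (nhds (g μ)) := by
  have hlim := tendsto_integral_mul_comp_add_div hp continuous_fermiDiracKernel.aestronglyMeasurable
    (integrable_one_add_abs_rpow_mul_fermiDiracKernel p) hg hgrowth μ
  rw [integral_fermiDiracKernel, one_mul] at hlim
  refine hlim.congr' ?_
  filter_upwards [eventually_gt_atTop 0] with β hβ
  rw [← integral_mul_comp_mul_sub_eq hβ]
  simp only [fermiDiracKernel, mul_assoc]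

/-- Minus the derivative of the Fermi–Dirac distribution converges to the Dirac
delta at `μ`: for a continuous function `g` of polynomial growth,
`∫ β e^{β(ξ−μ)} (e^{β(ξ−μ)}+1)⁻² g(ξ) dξ → g(μ)` as `β → ∞`. -/
theorem stmt_4 (g : ℝ → ℝ) (hg : Continuous g) (C₀ p : ℝ) (hC₀ : 0 < C₀)
    (hp : 0 ≤ p) (hgrowth : ∀ ξ : ℝ, |g ξ| ≤ C₀ * (1 + |ξ|) ^ p) (μ : ℝ) :
    Tendsto (fun β : ℝ =>
        ∫ ξ : ℝ, β * Real.exp (β * (ξ - μ)) * ((Real.exp (β * (ξ - μ)) + 1) ^ 2)⁻¹ * g ξ)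
      atTop (nhds (g μ)) :=
  stmt_4_general g hg C₀ p hp hgrowth μ
end

section
/- Let g : ℝ → ℝ be continuously differentiable with both g and g' bounded on ℝ. Then for every μ ∈ ℝ, the integral ∫_ℝ β²·e^{β(ξ−μ)}·(e^{β(ξ−μ)} − 1)·(e^{β(ξ−μ)} + 1)⁻³·g(ξ) dξ converges to g'(μ) as β → ∞. -/
/-!
After the substitution `t = β (ξ - μ)` the integrand is `-β² k'(β (ξ - μ)) g(ξ)`, where
`k(t) = eᵗ / (eᵗ + 1)²` is the logistic density. One integration by parts moves the derivative
onto `g`, and rescaling turns the integral into `∫ k(t) g'(μ + t / β) dt`. Since `k` is integrable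
with total mass `1` and `g'` is bounded and continuous, dominated convergence gives the limit
`g'(μ)`.
-/

open Filter Real MeasureTheory Topology

section RescaledKernel

variable {φ h : ℝ → ℝ}

theorem integral_mul_comp_mul_sub {β : ℝ} (hβ : 0 < β) (μ : ℝ) :
    ∫ ξ, β * φ (β * (ξ - μ)) * h ξ = ∫ t, φ t * h (μ + t / β) := by
  set ψ : ℝ → ℝ := fun t => φ t * h (μ + t / β)
  have hψ : ∀ ξ, β * φ (β * (ξ - μ)) * h ξ = β * ψ (β * (ξ - μ)) := fun ξ => by
    simp only [ψ, mul_div_cancel_left₀ _ hβ.ne', add_sub_cancel]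
    ring
  simp_rw [hψ]
  rw [integral_const_mul, integral_sub_right_eq_self (fun x => ψ (β * x)) μ,
    Measure.integral_comp_mul_left, abs_inv, abs_of_pos hβ, smul_eq_mul,
    mul_inv_cancel_left₀ hβ.ne']

theorem tendsto_integral_mul_comp_add_div_atTop (hφ : Integrable φ) (hm : Measurable h)
    {C : ℝ} (hC : ∀ x, |h x| ≤ C) {μ : ℝ} (hμ : ContinuousAt h μ) :
    Tendsto (fun β => ∫ t, φ t * h (μ + t / β)) atTop (𝓝 ((∫ t, φ t) * h μ)) := by
  rw [← integral_mul_const]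
  refine tendsto_integral_filter_of_dominated_convergence (fun t => ‖φ t‖ * C)
    (Eventually.of_forall fun β => hφ.aestronglyMeasurable.mul
      (hm.comp (measurable_const.add (measurable_id.div_const β))).aestronglyMeasurable)
    (Eventually.of_forall fun β => ae_of_all _ fun t => ?_) (hφ.norm.mul_const C)
    (ae_of_all _ fun t => (hμ.tendsto.comp ?_).const_mul (φ t))
  · rw [norm_mul]
    exact mul_le_mul_of_nonneg_left (hC _) (norm_nonneg _)
  · simpa using tendsto_const_nhds.add ((tendsto_const_nhds (x := t)).div_atTop tendsto_id)

theorem integral_rescaled_deriv_mul {φ' g : ℝ → ℝ} (hφ : ∀ t, HasDerivAt φ (φ' t) t)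
    (hφi : Integrable φ) (hφ'i : Integrable φ') (hg : Differentiable ℝ g)
    {M M' : ℝ} (hM : ∀ x, |g x| ≤ M) (hM' : ∀ x, |deriv g x| ≤ M') {β : ℝ} (hβ : β ≠ 0)
    (μ : ℝ) :
    ∫ ξ, β ^ 2 * φ' (β * (ξ - μ)) * g ξ = -∫ ξ, β * φ (β * (ξ - μ)) * deriv g ξ := by
  have rescaled {ψ : ℝ → ℝ} (hψ : Integrable ψ) : Integrable fun ξ => ψ (β * (ξ - μ)) :=
    (hψ.comp_mul_left' hβ).comp_sub_right μ
  have hu (ξ : ℝ) : HasDerivAt (fun ξ => β * φ (β * (ξ - μ))) (β ^ 2 * φ' (β * (ξ - μ))) ξ := by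
    have hlin : HasDerivAt (fun ξ => β * (ξ - μ)) β ξ := by
      simpa using ((hasDerivAt_id ξ).sub_const μ).const_mul β
    exact (((hφ _).comp ξ hlin).const_mul β).congr_deriv (by ring)
  rw [integral_mul_deriv_eq_deriv_mul_of_integrable (fun ξ _ => hu ξ)
    (fun ξ _ => (hg ξ).hasDerivAt)
    (((rescaled hφi).const_mul β).mul_bdd (measurable_deriv g).aestronglyMeasurable
      (ae_of_all _ hM'))
    (((rescaled hφ'i).const_mul _).mul_bdd hg.continuous.aestronglyMeasurable (ae_of_all _ hM))
    (((rescaled hφi).const_mul β).mul_bdd hg.continuous.aestronglyMeasurable (ae_of_all _ hM)),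
    neg_neg]

end RescaledKernel

section LogisticDensity

/-- `-∂_ξ f_FD(1, 0; ξ)`. -/
noncomputable def logisticDensity (t : ℝ) : ℝ := exp t / (exp t + 1) ^ 2

theorem logisticDensity_nonneg (t : ℝ) : 0 ≤ logisticDensity t := by
  unfold logisticDensity; positivity

theorem continuous_logisticDensity : Continuous logisticDensity :=
  continuous_exp.div (by fun_prop) fun t => by positivity

theorem logisticDensity_le_exp (t : ℝ) : logisticDensity t ≤ exp t :=
  div_le_self (exp_pos t).le (one_le_pow₀ (by linarith [exp_pos t]))

theorem logisticDensity_le_exp_neg (t : ℝ) : logisticDensity t ≤ exp (-t) := by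
  rw [logisticDensity, exp_neg, div_le_iff₀ (by positivity)]
  have := exp_pos t
  field_simp
  nlinarith

theorem integrable_logisticDensity : Integrable logisticDensity := by
  have hle {f : ℝ → ℝ} {s : Set ℝ} (hf : IntegrableOn f s volume)
      (hbd : ∀ t, logisticDensity t ≤ f t) : IntegrableOn logisticDensity s :=
    Integrable.mono' hf continuous_logisticDensity.aestronglyMeasurable
      (ae_of_all _ fun t => (norm_of_nonneg (logisticDensity_nonneg t)).trans_le (hbd t))
  have hIic := hle (integrableOn_exp_Iic 0) logisticDensity_le_exp
  have hIoi := hle (f := fun t => exp (-t)) (by simpa using exp_neg_integrableOn_Ioi 0 one_pos)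
    logisticDensity_le_exp_neg
  simpa using hIic.union hIoi

theorem hasDerivAt_logisticDensity (t : ℝ) :
    HasDerivAt logisticDensity (exp t * (1 - exp t) / (exp t + 1) ^ 3) t := by
  have hne : exp t + 1 ≠ 0 := by positivity
  refine ((hasDerivAt_exp t).div (((hasDerivAt_exp t).add_const 1).fun_pow 2)
    (pow_ne_zero 2 hne)).congr_deriv ?_
  field_simp
  ring

theorem integrable_deriv_logisticDensity :
    Integrable fun t => exp t * (1 - exp t) / (exp t + 1) ^ 3 := by
  refine integrable_logisticDensity.mono' (by fun_prop : Measurable _).aestronglyMeasurable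
    (ae_of_all _ fun t => ?_)
  have he := exp_pos t
  have hden : 0 < (exp t + 1) ^ 3 := by positivity
  rw [norm_eq_abs, abs_div, abs_mul, abs_of_pos he, abs_of_pos hden, logisticDensity,
    div_le_div_iff₀ hden (by positivity), abs_sub_comm]
  have : |exp t - 1| ≤ exp t + 1 := abs_le.2 ⟨by linarith, by linarith⟩
  calc exp t * |exp t - 1| * (exp t + 1) ^ 2
      ≤ exp t * (exp t + 1) * (exp t + 1) ^ 2 := by gcongr
    _ = exp t * (exp t + 1) ^ 3 := by ring

theorem integral_logisticDensity : ∫ t, logisticDensity t = 1 := by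
  have hF (t : ℝ) : HasDerivAt (fun s => -(exp s + 1)⁻¹) (logisticDensity t) t := by
    refine (((hasDerivAt_exp t).add_const 1).inv (by positivity)).neg.congr_deriv ?_
    rw [logisticDensity, neg_div, neg_neg]
  have hbot : Tendsto (fun s => -(exp s + 1)⁻¹) atBot (𝓝 (-1)) := by
    simpa using ((tendsto_exp_atBot.add_const 1).inv₀ (by norm_num)).neg
  have htop : Tendsto (fun s => -(exp s + 1)⁻¹) atTop (𝓝 0) := by
    simpa using (tendsto_exp_atTop.atTop_add tendsto_const_nhds).inv_tendsto_atTop.neg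
  simpa using integral_of_hasDerivAt_of_tendsto hF integrable_logisticDensity hbot htop

end LogisticDensity

/-- The second derivative of the Fermi–Dirac distribution converges to minus the
derivative of the Dirac delta at `μ`: for a bounded `C¹` function `g` with bounded
derivative, `∫ β² e^{β(ξ−μ)} (e^{β(ξ−μ)}−1) (e^{β(ξ−μ)}+1)⁻³ g(ξ) dξ → g'(μ)` as `β → ∞`. -/
theorem stmt_5 (g : ℝ → ℝ) (hg : ContDiff ℝ 1 g)
    (hgb : ∃ M : ℝ, ∀ x : ℝ, |g x| ≤ M)
    (hg'b : ∃ M : ℝ, ∀ x : ℝ, |deriv g x| ≤ M) (μ : ℝ) :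
    Tendsto (fun β : ℝ =>
        ∫ ξ : ℝ, β ^ 2 * Real.exp (β * (ξ - μ)) * (Real.exp (β * (ξ - μ)) - 1) *
          ((Real.exp (β * (ξ - μ)) + 1) ^ 3)⁻¹ * g ξ)
      atTop (nhds (deriv g μ)) := by
  obtain ⟨M, hM⟩ := hgb
  obtain ⟨M', hM'⟩ := hg'b
  have hlim := tendsto_integral_mul_comp_add_div_atTop integrable_logisticDensity
    (measurable_deriv g) hM' (hg.continuous_deriv le_rfl).continuousAt (μ := μ)
  rw [integral_logisticDensity, one_mul] at hlim
  refine hlim.congr' ?_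
  filter_upwards [eventually_gt_atTop 0] with β hβ
  rw [← integral_mul_comp_mul_sub hβ, ← neg_neg (∫ ξ, _ * deriv g ξ),
    ← integral_rescaled_deriv_mul hasDerivAt_logisticDensity integrable_logisticDensity
      integrable_deriv_logisticDensity (hg.differentiable one_ne_zero) hM hM' hβ.ne',
    ← integral_neg]
  congr 1 with ξ
  ring
end

section
/- Let E₀ ≤ a < b be real numbers and ρ₀ > 0. Let n : ℝ → ℝ be continuous and nondecreasing, with n(λ) = 0 for λ ≤ E₀, n(λ) = ρ₀ for all λ ∈ [a,b], and n(λ) ≤ C₀(1 + |λ|)^{3/2} for some C₀ > 0. Assume there exist δ > 0 and c > 0 such that n(a) − n(λ) ≥ c(a − λ)³ for λ ∈ [a − δ, a] and n(λ) − n(b) ≥ c(λ − b)³ for λ ∈ [b, b + δ]. Suppose μ : (0,∞) → ℝ satisfies for every β > 0 the equation ∫_ℝ β·e^{β(λ−μ(β))}·(e^{β(λ−μ(β))} + 1)⁻²·n(λ) dλ = ρ₀. Then a ≤ liminf_{β→∞} μ(β) ≤ limsup_{β→∞} μ(β) ≤ b. -/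
/-!
As `β → ∞` the kernel `β e^{β(ξ-μ)} / (e^{β(ξ-μ)} + 1)²` is a probability density concentrating
at `μ`, with tails bounded by `β e^{-β|ξ-μ|}`. If `μ(β) ≥ b + ε`, almost all of its mass sits where
`n ≥ n(b + ε/2) > ρ₀`, so the density would exceed `ρ₀`. If `μ(β) ≤ a - ε`, the mass on
`(-∞, a - ε/2]` sees at most `n(a - ε/2) < ρ₀`, and since `n` grows only polynomially the right tail
contributes `O(e^{-βε/2})`, so the density would fall short of `ρ₀`.
-/

open Filter Real MeasureTheory Topology Set

noncomputable def fermiDirac (β μ ξ : ℝ) : ℝ := (exp (β * (ξ - μ)) + 1)⁻¹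

noncomputable def fermiKernel (β μ ξ : ℝ) : ℝ :=
  β * exp (β * (ξ - μ)) * ((exp (β * (ξ - μ)) + 1) ^ 2)⁻¹

noncomputable def fermiDensity (n : ℝ → ℝ) (β μ : ℝ) : ℝ := ∫ ξ, fermiKernel β μ ξ * n ξ

section Kernel

variable {β μ : ℝ}

theorem fermiDirac_nonneg (ξ : ℝ) : 0 ≤ fermiDirac β μ ξ := by
  unfold fermiDirac; positivity

theorem fermiDirac_le_one (ξ : ℝ) : fermiDirac β μ ξ ≤ 1 :=
  inv_le_one_of_one_le₀ (by linarith [exp_pos (β * (ξ - μ))])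

theorem fermiDirac_self_add (x : ℝ) : fermiDirac β μ (μ + x) = (exp (β * x) + 1)⁻¹ := by
  simp [fermiDirac]

theorem fermiKernel_nonneg (hβ : 0 ≤ β) (ξ : ℝ) : 0 ≤ fermiKernel β μ ξ := by
  unfold fermiKernel; positivity

theorem fermiKernel_le (hβ : 0 ≤ β) (ξ : ℝ) : fermiKernel β μ ξ ≤ β * exp (-(β * (ξ - μ))) := by
  have he := exp_pos (β * (ξ - μ))
  rw [fermiKernel, mul_assoc, exp_neg]
  refine mul_le_mul_of_nonneg_left ?_ hβ
  rw [← div_eq_mul_inv, div_le_iff₀ (by positivity), inv_mul_eq_div, le_div_iff₀ he]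
  nlinarith

theorem continuous_fermiKernel : Continuous (fermiKernel β μ) := by
  unfold fermiKernel; fun_prop (disch := intro; positivity)

theorem hasDerivAt_fermiDirac (ξ : ℝ) :
    HasDerivAt (fermiDirac β μ) (-fermiKernel β μ ξ) ξ := by
  have h : HasDerivAt (fun ξ => β * (ξ - μ)) β ξ := by
    simpa using ((hasDerivAt_id ξ).sub_const μ).const_mul β
  refine ((h.exp.add_const 1).inv (by positivity)).congr_deriv ?_
  rw [fermiKernel]
  field_simp

theorem integral_fermiKernel (u v : ℝ) :
    ∫ ξ in u..v, fermiKernel β μ ξ = fermiDirac β μ u - fermiDirac β μ v := by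
  rw [intervalIntegral.integral_eq_sub_of_hasDerivAt (f := -fermiDirac β μ)
    (fun ξ _ => by simpa using (hasDerivAt_fermiDirac ξ).neg)
    (continuous_fermiKernel.intervalIntegrable u v)]
  simp only [Pi.neg_apply]; ring

end Kernel

section Density

variable {n : ℝ → ℝ} {β μ u v N : ℝ}

theorem le_integral_fermiKernel_mul (hβ : 0 ≤ β) (hn : IntervalIntegrable n volume u v)
    (huv : u ≤ v) (hN : ∀ ξ ∈ Icc u v, N ≤ n ξ) :
    (fermiDirac β μ u - fermiDirac β μ v) * N ≤ ∫ ξ in u..v, fermiKernel β μ ξ * n ξ := by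
  rw [← integral_fermiKernel, ← intervalIntegral.integral_mul_const]
  exact intervalIntegral.integral_mono_on huv
    ((continuous_fermiKernel.mul continuous_const).intervalIntegrable u v)
    (hn.continuousOn_mul continuous_fermiKernel.continuousOn)
    fun ξ hξ => mul_le_mul_of_nonneg_left (hN ξ hξ) (fermiKernel_nonneg hβ ξ)

theorem integral_fermiKernel_mul_le (hβ : 0 ≤ β) (hn : IntervalIntegrable n volume u v)
    (huv : u ≤ v) (hN : ∀ ξ ∈ Icc u v, n ξ ≤ N) :
    ∫ ξ in u..v, fermiKernel β μ ξ * n ξ ≤ (fermiDirac β μ u - fermiDirac β μ v) * N := by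
  rw [← integral_fermiKernel, ← intervalIntegral.integral_mul_const]
  exact intervalIntegral.integral_mono_on huv
    (hn.continuousOn_mul continuous_fermiKernel.continuousOn)
    ((continuous_fermiKernel.mul continuous_const).intervalIntegrable u v)
    fun ξ hξ => mul_le_mul_of_nonneg_left (hN ξ hξ) (fermiKernel_nonneg hβ ξ)

theorem intervalIntegral_le_fermiDensity (hβ : 0 ≤ β) (hn0 : 0 ≤ n)
    (hint : Integrable fun ξ => fermiKernel β μ ξ * n ξ) (huv : u ≤ v) :
    ∫ ξ in u..v, fermiKernel β μ ξ * n ξ ≤ fermiDensity n β μ := by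
  rw [intervalIntegral.integral_of_le huv]
  exact setIntegral_le_integral hint
    (ae_of_all _ fun ξ => mul_nonneg (fermiKernel_nonneg hβ ξ) (hn0 ξ))

theorem setIntegral_Iic_fermiKernel_mul_le (hβ : 0 ≤ β) (hn : Monotone n) (hnv : 0 ≤ n v)
    (hint : IntegrableOn (fun ξ => fermiKernel β μ ξ * n ξ) (Iic v)) :
    ∫ ξ in Iic v, fermiKernel β μ ξ * n ξ ≤ n v := by
  refine le_of_tendsto (intervalIntegral_tendsto_integral_Iic v hint tendsto_id) ?_
  filter_upwards [eventually_le_atBot v] with u huv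
  calc ∫ ξ in u..v, fermiKernel β μ ξ * n ξ
      ≤ (fermiDirac β μ u - fermiDirac β μ v) * n v :=
        integral_fermiKernel_mul_le hβ hn.intervalIntegrable huv fun ξ hξ => hn hξ.2
    _ ≤ n v := by
        nlinarith [fermiDirac_le_one (β := β) (μ := μ) u, fermiDirac_nonneg (β := β) (μ := μ) v]

theorem setIntegral_Ioi_fermiKernel_mul_le (hβ : 1 < β) (hn0 : 0 ≤ n) {K : ℝ}
    (hK : ∀ ξ, v ≤ ξ → n ξ ≤ K * exp (ξ - v)) :
    ∫ ξ in Ioi v, fermiKernel β μ ξ * n ξ ≤ K * β / (β - 1) * exp (-(β * (v - μ))) := by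
  have hexp : ∀ ξ, exp (-(β * (ξ - μ))) * exp (ξ - v) = exp (β * μ - v) * exp ((1 - β) * ξ) :=
    fun ξ => by rw [← exp_add, ← exp_add]; ring_nf
  calc ∫ ξ in Ioi v, fermiKernel β μ ξ * n ξ
      ≤ ∫ ξ in Ioi v, K * β * exp (β * μ - v) * exp ((1 - β) * ξ) := by
        refine integral_mono_of_nonneg
          (ae_of_all _ fun ξ => mul_nonneg (fermiKernel_nonneg (by linarith) ξ) (hn0 ξ))
          ((integrableOn_exp_mul_Ioi (by linarith) v).const_mul _)
          ((ae_restrict_iff' measurableSet_Ioi).2 (ae_of_all _ fun ξ hξ => ?_))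
        calc fermiKernel β μ ξ * n ξ ≤ β * exp (-(β * (ξ - μ))) * (K * exp (ξ - v)) :=
              mul_le_mul (fermiKernel_le (by linarith) ξ) (hK ξ (le_of_lt hξ)) (hn0 ξ)
                (by positivity)
          _ = K * β * exp (β * μ - v) * exp ((1 - β) * ξ) := by
              rw [mul_mul_mul_comm, hexp]; ring
    _ = K * β / (β - 1) * (exp (β * μ - v) * exp ((1 - β) * v)) := by
        have h1 : 1 - β ≠ 0 := by linarith
        have h2 : β - 1 ≠ 0 := by linarith
        rw [integral_const_mul, integral_exp_mul_Ioi (by linarith)]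
        field_simp
        ring
    _ = K * β / (β - 1) * exp (-(β * (v - μ))) := by
        rw [← exp_add]
        ring_nf

end Density

theorem one_add_abs_rpow_le_mul_exp (p v : ℝ) :
    ∃ K, ∀ ξ, v ≤ ξ → (1 + |ξ|) ^ p ≤ K * exp (ξ - v) := by
  set k := ⌈p⌉₊
  refine ⟨k.factorial * exp (1 + |v|), fun ξ hξ => ?_⟩
  have hξv : |ξ| ≤ |v| + (ξ - v) := by
    simpa [abs_of_nonneg (sub_nonneg.2 hξ)] using abs_add_le v (ξ - v)
  calc (1 + |ξ|) ^ p ≤ (1 + |ξ|) ^ (k : ℝ) :=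
        rpow_le_rpow_of_exponent_le (by linarith [abs_nonneg ξ]) (Nat.le_ceil p)
    _ = (1 + |ξ|) ^ k := rpow_natCast _ _
    _ ≤ (1 + |v| + (ξ - v)) ^ k := pow_le_pow_left₀ (by positivity) (by linarith) k
    _ ≤ k.factorial * exp (1 + |v| + (ξ - v)) := by
        rw [← div_le_iff₀' (by positivity)]
        exact pow_div_factorial_le_exp _ (by linarith [abs_nonneg v]) k
    _ = k.factorial * exp (1 + |v|) * exp (ξ - v) := by rw [exp_add, mul_assoc]

theorem le_liminf_and_limsup_le {α : Type*} {l : Filter α} [l.NeBot] {f : α → ℝ} {a b : ℝ}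
    (hlow : ∀ ε > 0, ∀ᶠ x in l, a - ε < f x) (hup : ∀ ε > 0, ∀ᶠ x in l, f x < b + ε) :
    a ≤ liminf f l ∧ liminf f l ≤ limsup f l ∧ limsup f l ≤ b := by
  have hbdd_above : IsBoundedUnder (· ≤ ·) l f :=
    ⟨b + 1, eventually_map.2 ((hup 1 one_pos).mono fun _ => le_of_lt)⟩
  have hbdd_below : IsBoundedUnder (· ≥ ·) l f :=
    ⟨a - 1, eventually_map.2 ((hlow 1 one_pos).mono fun _ => le_of_lt)⟩
  refine ⟨le_of_forall_pos_le_add fun ε hε => ?_, liminf_le_limsup hbdd_above hbdd_below,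
    le_of_forall_pos_le_add fun ε hε => ?_⟩
  · have := le_liminf_of_le hbdd_above.isCoboundedUnder_ge ((hlow ε hε).mono fun _ => le_of_lt)
    linarith
  · exact limsup_le_of_le hbdd_below.isCoboundedUnder_le ((hup ε hε).mono fun _ => le_of_lt)

section ChemicalPotential

variable {n : ℝ → ℝ} {ρ : ℝ} {μ : ℝ → ℝ}

theorem integrable_of_fermiDensity_ne_zero {β m : ℝ} (h : fermiDensity n β m ≠ 0) :
    Integrable fun ξ => fermiKernel β m ξ * n ξ :=
  .of_integral_ne_zero h

theorem eventually_chemicalPotential_lt (hn : Monotone n) (hn0 : 0 ≤ n) (hρ : ρ ≠ 0)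
    (hμ : ∀ β > 0, fermiDensity n β (μ β) = ρ) {s t : ℝ} (hs : ρ < n s) (hst : s < t) :
    ∀ᶠ β in atTop, μ β < t := by
  have hlim : Tendsto (fun β => ((exp (β * (s - t)) + 1)⁻¹ - (exp (β * 1) + 1)⁻¹) * n s)
      atTop (𝓝 (n s)) := by
    have h0 : Tendsto (fun β => exp (β * (s - t))) atTop (𝓝 0) :=
      tendsto_exp_atBot.comp (tendsto_id.atTop_mul_const_of_neg (sub_neg.2 hst))
    have hinf : Tendsto (fun β => exp (β * 1) + 1) atTop atTop :=
      tendsto_atTop_add_const_right _ 1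
        (tendsto_exp_atTop.comp (tendsto_id.atTop_mul_const one_pos))
    simpa using (((h0.add_const 1).inv₀ (by norm_num)).sub hinf.inv_tendsto_atTop).mul_const (n s)
  filter_upwards [hlim.eventually (lt_mem_nhds hs), eventually_gt_atTop 0] with β hρβ hβ
  by_contra! hle
  refine hρβ.not_ge ?_
  -- the window `[μ β + (s - t), μ β + 1]` lies above `s` and carries kernel mass tending to `1`
  rw [← fermiDirac_self_add (μ := μ β), ← fermiDirac_self_add (μ := μ β), ← hμ β hβ]
  exact (le_integral_fermiKernel_mul hβ.le hn.intervalIntegrable (by linarith)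
    fun ξ hξ => hn (by linarith [hξ.1])).trans
    (intervalIntegral_le_fermiDensity hβ.le hn0
      (integrable_of_fermiDensity_ne_zero (hμ β hβ ▸ hρ)) (by linarith))

theorem eventually_lt_chemicalPotential (hn : Monotone n) (hn0 : 0 ≤ n) (hρ : ρ ≠ 0)
    (hμ : ∀ β > 0, fermiDensity n β (μ β) = ρ) {s v K : ℝ} (hv : n v < ρ) (hsv : s < v)
    (hK : ∀ ξ, v ≤ ξ → n ξ ≤ K * exp (ξ - v)) :
    ∀ᶠ β in atTop, s < μ β := by
  have hK0 : 0 ≤ K := by simpa using (hn0 v).trans (hK v le_rfl)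
  have hlim : Tendsto (fun β => 2 * K * exp (-(β * (v - s)))) atTop (𝓝 0) := by
    simpa using (tendsto_exp_atBot.comp (tendsto_neg_atTop_atBot.comp
      (tendsto_id.atTop_mul_const (sub_pos.2 hsv)))).const_mul (2 * K)
  filter_upwards [hlim.eventually (gt_mem_nhds (sub_pos.2 hv)), eventually_ge_atTop 2]
    with β hsmall hβ
  by_contra! hle
  have hint := integrable_of_fermiDensity_ne_zero (hμ β (by linarith) ▸ hρ)
  have htail : ∫ ξ in Ioi v, fermiKernel β (μ β) ξ * n ξ ≤ 2 * K * exp (-(β * (v - s))) := by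
    refine (setIntegral_Ioi_fermiKernel_mul_le (by linarith) hn0 hK).trans ?_
    have hratio : β / (β - 1) ≤ 2 := by rw [div_le_iff₀ (by linarith)]; linarith
    calc K * β / (β - 1) * exp (-(β * (v - μ β)))
        = K * (β / (β - 1)) * exp (-(β * (v - μ β))) := by ring
      _ ≤ K * 2 * exp (-(β * (v - s))) := by gcongr
      _ = 2 * K * exp (-(β * (v - s))) := by ring
  have hsplit :=
    intervalIntegral.integral_Iic_add_Ioi (b := v) hint.integrableOn hint.integrableOn
  have hhead := setIntegral_Iic_fermiKernel_mul_le (by linarith) hn (hn0 v) hint.integrableOn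
  have hρβ : fermiDensity n β (μ β) = ρ := hμ β (by linarith)
  rw [fermiDensity] at hρβ
  linarith

end ChemicalPotential

theorem stmt_10_general (E₀ a b ρ₀ : ℝ) (hab : a < b) (hρ₀ : 0 < ρ₀)
    (n : ℝ → ℝ) (hmono : Monotone n)
    (hzero : ∀ l : ℝ, l ≤ E₀ → n l = 0)
    (hgap : ∀ l ∈ Set.Icc a b, n l = ρ₀)
    (C₀ : ℝ) (hC₀ : 0 < C₀)
    (hbound : ∀ l : ℝ, n l ≤ C₀ * (1 + |l|) ^ ((3 : ℝ) / 2))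
    (δ c : ℝ) (hδ : 0 < δ) (hc : 0 < c)
    (hedge_a : ∀ l ∈ Set.Icc (a - δ) a, n a - n l ≥ c * (a - l) ^ 3)
    (hedge_b : ∀ l ∈ Set.Icc b (b + δ), n l - n b ≥ c * (l - b) ^ 3)
    (μ : ℝ → ℝ)
    (hμ : ∀ β > (0 : ℝ),
      ∫ l : ℝ, β * Real.exp (β * (l - μ β)) * ((Real.exp (β * (l - μ β)) + 1) ^ 2)⁻¹ * n l
        = ρ₀) :
    a ≤ Filter.liminf μ atTop ∧ Filter.liminf μ atTop ≤ Filter.limsup μ atTop ∧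
      Filter.limsup μ atTop ≤ b := by
  have hn0 : 0 ≤ n := fun l => by
    rcases le_total l E₀ with h | h
    · exact (hzero l h).ge
    · exact (hzero E₀ le_rfl).ge.trans (hmono h)
  have below_gap : ∀ t < a, n t < ρ₀ := fun t ht => by
    have hl := hedge_a (max t (a - δ)) ⟨le_max_right _ _, max_le ht.le (by linarith)⟩
    have hpos := mul_pos hc (pow_pos (sub_pos.2 (max_lt ht (by linarith : a - δ < a))) 3)
    linarith [hmono (le_max_left t (a - δ)), hgap a ⟨le_rfl, hab.le⟩]
  have above_gap : ∀ t > b, ρ₀ < n t := fun t ht => by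
    have hl := hedge_b (min t (b + δ)) ⟨le_min ht.le (by linarith), min_le_right _ _⟩
    have hpos := mul_pos hc (pow_pos (sub_pos.2 (lt_min ht (by linarith : b < b + δ))) 3)
    linarith [hmono (min_le_left t (b + δ)), hgap b ⟨hab.le, le_rfl⟩]
  have hdensity : ∀ β > 0, fermiDensity n β (μ β) = ρ₀ := hμ
  refine le_liminf_and_limsup_le (fun ε hε => ?_) (fun ε hε => ?_)
  · obtain ⟨K, hK⟩ := one_add_abs_rpow_le_mul_exp ((3 : ℝ) / 2) (a - ε / 2)
    refine eventually_lt_chemicalPotential hmono hn0 hρ₀.ne' hdensity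
      (below_gap (a - ε / 2) (by linarith)) (by linarith) (K := C₀ * K) fun ξ hξ => ?_
    rw [mul_assoc]
    exact (hbound ξ).trans (mul_le_mul_of_nonneg_left (hK ξ hξ) hC₀.le)
  · exact eventually_chemicalPotential_lt hmono hn0 hρ₀.ne' hdensity
      (above_gap (b + ε / 2) (by linarith)) (by linarith)

/-- Localization of the chemical potential in a spectral gap `[a,b]`:
`a ≤ liminf_{β→∞} μ(β) ≤ limsup_{β→∞} μ(β) ≤ b`. -/
theorem stmt_10 (E₀ a b ρ₀ : ℝ) (hE₀a : E₀ ≤ a) (hab : a < b) (hρ₀ : 0 < ρ₀)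
    (n : ℝ → ℝ) (hcont : Continuous n) (hmono : Monotone n)
    (hzero : ∀ l : ℝ, l ≤ E₀ → n l = 0)
    (hgap : ∀ l ∈ Set.Icc a b, n l = ρ₀)
    (C₀ : ℝ) (hC₀ : 0 < C₀)
    (hbound : ∀ l : ℝ, n l ≤ C₀ * (1 + |l|) ^ ((3 : ℝ) / 2))
    (δ c : ℝ) (hδ : 0 < δ) (hc : 0 < c)
    (hedge_a : ∀ l ∈ Set.Icc (a - δ) a, n a - n l ≥ c * (a - l) ^ 3)
    (hedge_b : ∀ l ∈ Set.Icc b (b + δ), n l - n b ≥ c * (l - b) ^ 3)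
    (μ : ℝ → ℝ)
    (hμ : ∀ β > (0 : ℝ),
      ∫ l : ℝ, β * Real.exp (β * (l - μ β)) * ((Real.exp (β * (l - μ β)) + 1) ^ 2)⁻¹ * n l
        = ρ₀) :
    a ≤ Filter.liminf μ atTop ∧ Filter.liminf μ atTop ≤ Filter.limsup μ atTop ∧
      Filter.limsup μ atTop ≤ b :=
  stmt_10_general E₀ a b ρ₀ hab hρ₀ n hmono hzero hgap C₀ hC₀ hbound δ c hδ hc hedge_a hedge_b μ hμ
end

section
/- Let E : ℝ³ → ℝ be three times continuously differentiable and 2π-periodic in each coordinate, and let f : ℝ → ℝ be three times continuously differentiable. Write ∂ᵢE, ∂ᵢ²E and ∂₁∂₂E for the partial derivatives of E, and let Q = [−π,π]³. Then ∫_Q { f'''(E)·[ ((∂₁E)² + (∂₂E)²)/6 + (1/12)·( (∂₁E)²(1 − ∂₂²E) + (∂₂E)²(1 − ∂₁²E) + 2·∂₁E·∂₂E·∂₁∂₂E ) ] + f''(E)·(∂₁²E + ∂₂²E)/4 } dk = (1/6)·∫_Q f''(E)·( ∂₁²E·∂₂²E − (∂₁∂₂E)² ) dk. -/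
/-!
The difference of the two integrands is the divergence `∂₀F₀ + ∂₁F₁` of the planar field
`F_p = f''(E) · (∂_pE / 4 + (∂_p∂_qE · ∂_qE − ∂_q²E · ∂_pE) / 12)`, `{p, q} = {0, 1}`:
expanding `∂_pF_p` by the product and chain rules, the third derivatives of `E` cancel by symmetry
of mixed partials. Each `F_p` is `C¹` and periodic in direction `p`, so by the divergence theorem
on the box `[−π, π]³` the integral of `∂_pF_p` reduces to the two faces orthogonal to `e_p`,
which cancel.
-/

open Real MeasureTheory

/-- First partial derivative `∂ᵢ E` of a function on `ℝ³`. -/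
noncomputable def pderiv3 (E : (Fin 3 → ℝ) → ℝ) (i : Fin 3) (k : Fin 3 → ℝ) : ℝ :=
  fderiv ℝ E k (Pi.single i 1)

/-- Second partial derivative `∂ᵢ∂ⱼ E` of a function on `ℝ³`. -/
noncomputable def pderiv3₂ (E : (Fin 3 → ℝ) → ℝ) (i j : Fin 3) (k : Fin 3 → ℝ) : ℝ :=
  fderiv ℝ (fun x => fderiv ℝ E x (Pi.single j 1)) k (Pi.single i 1)

open Set Function

theorem integral_fderiv_single_eq_zero_of_periodic {n : ℕ} {a b : Fin (n + 1) → ℝ} (hle : a ≤ b)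
    {g : (Fin (n + 1) → ℝ) → ℝ} (hg : ContDiff ℝ 1 g) {i : Fin (n + 1)}
    (hper : Periodic g (Pi.single i (b i - a i))) :
    ∫ x in Icc a b, fderiv ℝ g x (Pi.single i 1) = 0 := by
  set F' : Fin (n + 1) → (Fin (n + 1) → ℝ) → (Fin (n + 1) → ℝ) →L[ℝ] ℝ :=
    Pi.single i (fderiv ℝ g)
  have hsum : ∀ x, ∑ j, F' j x (Pi.single j 1)
      = fderiv ℝ g x (Pi.single i 1) := fun x => by
    rw [Fintype.sum_eq_single i fun j hj => by simp [F', Pi.single_eq_of_ne hj]]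
    simp [F']
  have hdiv := integral_divergence_of_hasFDerivAt_off_countable' a b hle (Pi.single i g) F' ∅
    countable_empty
    (fun j => by
      rcases eq_or_ne j i with rfl | hj
      · simpa using hg.continuous.continuousOn
      · rw [Pi.single_eq_of_ne hj]; exact continuousOn_const)
    (fun x _ j => by
      rcases eq_or_ne j i with rfl | hj
      · simpa [F'] using (hg.differentiable one_ne_zero x).hasFDerivAt
      · simp only [F', Pi.single_eq_of_ne hj]; exact hasFDerivAt_const 0 x)
    (by simpa only [hsum] using
      ((hg.continuous_fderiv one_ne_zero).clm_apply continuous_const).integrableOn_Icc)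
  simp only [hsum] at hdiv
  rw [hdiv, Fintype.sum_eq_single i fun j hj => by simp [Pi.single_eq_of_ne hj]]
  have hface : ∀ y, g (Fin.insertNth i (b i) y) = g (Fin.insertNth i (a i) y) := fun y => by
    have hshift : (Fin.insertNth i (b i) y : Fin (n + 1) → ℝ)
        = Fin.insertNth i (a i) y + Pi.single i (b i - a i) := by
      rw [← Fin.insertNth_sub_same, add_sub_cancel]
    rw [hshift, hper]
  simp [hface]

section pderiv3

variable {g u v : (Fin 3 → ℝ) → ℝ} {i : Fin 3} {k : Fin 3 → ℝ}

theorem pderiv3₂_eq_pderiv3_pderiv3 (i j : Fin 3) :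
    pderiv3₂ g i j = pderiv3 (pderiv3 g j) i := rfl

theorem ContDiff.pderiv3 {m n : WithTop ℕ∞} (hg : ContDiff ℝ n g) (hmn : m + 1 ≤ n) (j : Fin 3) :
    ContDiff ℝ m (pderiv3 g j) :=
  (hg.fderiv_right hmn).clm_apply contDiff_const

theorem Function.Periodic.pderiv3 {c : Fin 3 → ℝ} (hg : Periodic g c) (j : Fin 3) :
    Periodic (pderiv3 g j) c := fun x => by
  simp only [_root_.pderiv3, ← fderiv_comp_add_right, hg.funext]

theorem pderiv3_comm (hg : ContDiff ℝ 2 g) (i j : Fin 3) :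
    pderiv3 (pderiv3 g j) i = pderiv3 (pderiv3 g i) j := funext fun k => by
  have hd : DifferentiableAt ℝ (fderiv ℝ g) k :=
    (hg.fderiv_right (m := 1) (by norm_num)).differentiable one_ne_zero k
  have hsnd : ∀ v w, fderiv ℝ (fun x => fderiv ℝ g x w) k v = fderiv ℝ (fderiv ℝ g) k v w :=
    fun v w => by simp [fderiv_clm_apply hd (differentiableAt_const w)]
  simp only [← pderiv3₂_eq_pderiv3_pderiv3, pderiv3₂, hsnd]
  exact hg.contDiffAt.isSymmSndFDerivAt (by norm_num) _ _

theorem pderiv3_mul (hu : DifferentiableAt ℝ u k) (hv : DifferentiableAt ℝ v k) :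
    pderiv3 (fun x => u x * v x) i k = pderiv3 u i k * v k + u k * pderiv3 v i k := by
  simp [pderiv3, fderiv_fun_mul hu hv, mul_comm, add_comm]

theorem pderiv3_add (hu : DifferentiableAt ℝ u k) (hv : DifferentiableAt ℝ v k) :
    pderiv3 (fun x => u x + v x) i k = pderiv3 u i k + pderiv3 v i k := by
  simp [pderiv3, fderiv_fun_add hu hv]

theorem pderiv3_sub (hu : DifferentiableAt ℝ u k) (hv : DifferentiableAt ℝ v k) :
    pderiv3 (fun x => u x - v x) i k = pderiv3 u i k - pderiv3 v i k := by
  simp [pderiv3, fderiv_fun_sub hu hv]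

theorem pderiv3_const (c : ℝ) : pderiv3 (fun _ => c) i k = 0 := by
  simp [pderiv3]

theorem pderiv3_comp {φ : ℝ → ℝ} (hφ : DifferentiableAt ℝ φ (g k)) (hg : DifferentiableAt ℝ g k) :
    pderiv3 (fun x => φ (g x)) i k = deriv φ (g k) * pderiv3 g i k := by
  simp [pderiv3, fderiv_fun_comp k hφ hg, mul_comm]

end pderiv3

section flux

noncomputable def flux (f : ℝ → ℝ) (E : (Fin 3 → ℝ) → ℝ) (p q : Fin 3) (x : Fin 3 → ℝ) : ℝ :=
  iteratedDeriv 2 f (E x) * (1 / 4 * pderiv3 E p x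
    + 1 / 12 * (pderiv3₂ E p q x * pderiv3 E q x - pderiv3₂ E q q x * pderiv3 E p x))

variable {f : ℝ → ℝ} {E : (Fin 3 → ℝ) → ℝ}

theorem pderiv3_flux (hf : ContDiff ℝ 3 f) (hE : ContDiff ℝ 3 E) (p q : Fin 3) (k : Fin 3 → ℝ) :
    pderiv3 (flux f E p q) p k
      = iteratedDeriv 3 f (E k) * pderiv3 E p k * (1 / 4 * pderiv3 E p k
          + 1 / 12 * (pderiv3₂ E p q k * pderiv3 E q k - pderiv3₂ E q q k * pderiv3 E p k))
        + iteratedDeriv 2 f (E k) * (1 / 4 * pderiv3₂ E p p k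
          + 1 / 12 * (pderiv3 (pderiv3₂ E p q) p k * pderiv3 E q k + pderiv3₂ E p q k ^ 2
            - pderiv3 (pderiv3₂ E q q) p k * pderiv3 E p k
            - pderiv3₂ E q q k * pderiv3₂ E p p k)) := by
  have hf2 : Differentiable ℝ (iteratedDeriv 2 f) :=
    hf.differentiable_iteratedDeriv 2 (by norm_num)
  have hE1 : Differentiable ℝ E := hE.differentiable (by norm_num)
  have hE2 : ∀ r, ContDiff ℝ 2 (pderiv3 E r) := fun r => hE.pderiv3 (by norm_num) r
  have hdE : ∀ r, Differentiable ℝ (pderiv3 E r) :=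
    fun r => (hE2 r).differentiable (by norm_num)
  have hd2E : ∀ r s, Differentiable ℝ (pderiv3₂ E r s) :=
    fun r s => ((hE2 s).pderiv3 (m := 1) (by norm_num) r).differentiable (by norm_num)
  unfold flux
  simp (disch := fun_prop) only [pderiv3_mul, pderiv3_comp, pderiv3_add, pderiv3_sub,
    pderiv3_const, ← iteratedDeriv_succ, ← pderiv3₂_eq_pderiv3_pderiv3]
  ring

theorem contDiff_flux (hf : ContDiff ℝ 3 f) (hE : ContDiff ℝ 3 E) (p q : Fin 3) :
    ContDiff ℝ 1 (flux f E p q) := by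
  have hf2 : ContDiff ℝ 1 (iteratedDeriv 2 f) :=
    (contDiff_nat_succ_iff_contDiff_one_iteratedDeriv (n := 2).1 hf).2
  have hE1 : ContDiff ℝ 1 E := hE.of_le (by norm_num)
  have hE2 : ∀ r, ContDiff ℝ 2 (pderiv3 E r) := fun r => hE.pderiv3 (by norm_num) r
  have hdE : ∀ r, ContDiff ℝ 1 (pderiv3 E r) := fun r => (hE2 r).of_le (by norm_num)
  have hd2E : ∀ r s, ContDiff ℝ 1 (pderiv3₂ E r s) := fun r s => (hE2 s).pderiv3 le_rfl r
  unfold flux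
  fun_prop

theorem Function.Periodic.flux {c : Fin 3 → ℝ} (hE : Periodic E c) (p q : Fin 3) :
    Periodic (flux f E p q) c := fun x => by
  simp only [_root_.flux, pderiv3₂_eq_pderiv3_pderiv3, hE x, hE.pderiv3 _ x,
    (hE.pderiv3 _).pderiv3 _ x]

theorem integrand_eq_pderiv3_flux_add (hf : ContDiff ℝ 3 f) (hE : ContDiff ℝ 3 E)
    (k : Fin 3 → ℝ) :
    iteratedDeriv 3 f (E k) *
            (((pderiv3 E 0 k) ^ 2 + (pderiv3 E 1 k) ^ 2) / 6
              + (1 / 12) *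
                ((pderiv3 E 0 k) ^ 2 * (1 - pderiv3₂ E 1 1 k)
                  + (pderiv3 E 1 k) ^ 2 * (1 - pderiv3₂ E 0 0 k)
                  + 2 * pderiv3 E 0 k * pderiv3 E 1 k * pderiv3₂ E 0 1 k))
          + iteratedDeriv 2 f (E k) * (pderiv3₂ E 0 0 k + pderiv3₂ E 1 1 k) / 4
      = pderiv3 (flux f E 0 1) 0 k + pderiv3 (flux f E 1 0) 1 k
        + 1 / 6 * (iteratedDeriv 2 f (E k) *
            (pderiv3₂ E 0 0 k * pderiv3₂ E 1 1 k - (pderiv3₂ E 0 1 k) ^ 2)) := by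
  have hE2 : ∀ r, ContDiff ℝ 2 (pderiv3 E r) := fun r => hE.pderiv3 (by norm_num) r
  have h10 : pderiv3₂ E 1 0 = pderiv3₂ E 0 1 := pderiv3_comm (hE.of_le (by norm_num)) 1 0
  have h011 : pderiv3 (pderiv3₂ E 0 1) 1 = pderiv3 (pderiv3₂ E 1 1) 0 :=
    pderiv3_comm (hE2 1) 1 0
  have h001 : pderiv3 (pderiv3₂ E 0 0) 1 = pderiv3 (pderiv3₂ E 0 1) 0 := by
    rw [← h10]
    exact pderiv3_comm (hE2 0) 1 0
  rw [pderiv3_flux hf hE, pderiv3_flux hf hE, h10, h011, h001]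
  ring

end flux

/-- Repeated integration by parts over the period cell `Q = [−π,π]³`: for a `C³`
`2π`-periodic Bloch energy `E` and a `C³` function `f`, the combination multiplying
`f'''∘E` can be traded for the Hessian-determinant combination multiplying `f''∘E`. -/
theorem stmt_13 (E : (Fin 3 → ℝ) → ℝ) (hE : ContDiff ℝ 3 E)
    (hper : ∀ (k : Fin 3 → ℝ) (i : Fin 3), E (k + (2 * π) • (Pi.single i 1 : Fin 3 → ℝ)) = E k)
    (f : ℝ → ℝ) (hf : ContDiff ℝ 3 f) :
    (∫ k in (Set.Icc (fun _ => -π) (fun _ => π) : Set (Fin 3 → ℝ)),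
        (iteratedDeriv 3 f (E k) *
            (((pderiv3 E 0 k) ^ 2 + (pderiv3 E 1 k) ^ 2) / 6
              + (1 / 12) *
                ((pderiv3 E 0 k) ^ 2 * (1 - pderiv3₂ E 1 1 k)
                  + (pderiv3 E 1 k) ^ 2 * (1 - pderiv3₂ E 0 0 k)
                  + 2 * pderiv3 E 0 k * pderiv3 E 1 k * pderiv3₂ E 0 1 k))
          + iteratedDeriv 2 f (E k) * (pderiv3₂ E 0 0 k + pderiv3₂ E 1 1 k) / 4))
      = (1 / 6) *
        ∫ k in (Set.Icc (fun _ => -π) (fun _ => π) : Set (Fin 3 → ℝ)),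
          iteratedDeriv 2 f (E k) *
            (pderiv3₂ E 0 0 k * pderiv3₂ E 1 1 k - (pderiv3₂ E 0 1 k) ^ 2) := by
  have hQ : (fun _ => -π) ≤ (fun _ => π : Fin 3 → ℝ) := fun _ => by linarith [pi_pos]
  have hEper : ∀ i, Periodic E (Pi.single i (π - -π)) := fun i k => by
    simpa [← Pi.single_smul', two_mul] using hper k i
  have hflux : ∀ p q, ∫ k in Icc (fun _ => -π) (fun _ => π), pderiv3 (flux f E p q) p k = 0 :=
    fun p q => integral_fderiv_single_eq_zero_of_periodic hQ (contDiff_flux hf hE p q)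
      ((hEper p).flux p q)
  have hcont : ∀ p q, Continuous (pderiv3 (flux f E p q) p) := fun p q =>
    ((contDiff_flux hf hE p q).pderiv3 (m := 0) le_rfl p).continuous
  have hcontE₂ : ∀ r s, Continuous (pderiv3₂ E r s) := fun r s =>
    ((hE.pderiv3 (m := 2) (by norm_num) s).pderiv3 (m := 0) (by norm_num) r).continuous
  have hcontf₂ : Continuous (iteratedDeriv 2 f) := hf.continuous_iteratedDeriv 2 (by norm_num)
  have hcontE : Continuous E := hE.continuous
  simp_rw [integrand_eq_pderiv3_flux_add hf hE]
  rw [integral_add, integral_add, hflux, hflux, integral_const_mul, zero_add, zero_add]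
  all_goals exact Continuous.integrableOn_Icc (by fun_prop)
end

section
/- Let m₁, m₂, m₃ > 0, let Q = [−π,π]³, and let E : Q → ℝ be continuous with E(0) = E₀, such that for every r > 0 the infimum of E over {k ∈ Q : |k| ≥ r} is strictly greater than E₀, and such that E(k) = E₀ + (1/2)(k₁²/m₁ + k₂²/m₂ + k₃²/m₃) + O(|k|⁴) as k → 0. Suppose ρ₁ > 0 and Δ : (0,ρ₁) → (0,∞) satisfy (2π)⁻³·vol{k ∈ Q : E(k) ≤ E₀ + Δ(ρ₀)} = ρ₀ for all ρ₀ ∈ (0,ρ₁), and Δ(ρ₀) → 0 as ρ₀ → 0⁺. Then Δ(ρ₀) = s·ρ₀^{2/3} + O(ρ₀^{4/3}) as ρ₀ → 0⁺, where s := (6π²)^{2/3}/(2·(m₁m₂m₃)^{1/3}). -/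
/-!
Near its minimum the band is the kinetic energy `q k = ∑ kᵢ² / (2 mᵢ)` up to `O(‖k‖⁴) = O(q²)`,
and the gap condition keeps the sublevel set `{k ∈ Q | E k ≤ E₀ + x}` near `0`; so for small `x`
it lies between the ellipsoids `{q ≤ x ∓ K x²}`. Ellipsoid volumes grow like `t^{3/2}`, and
`u = s ρ^{2/3}` is exactly the level whose ellipsoid has volume `(2π)³ ρ`. Monotonicity of volume
then gives `|Δ - u| ≤ K Δ² = O(ρ^{4/3})`.
-/

open Real MeasureTheory Filter Asymptotics Metric Topology

noncomputable def kineticEnergy {ι : Type*} [Fintype ι] (m k : ι → ℝ) : ℝ :=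
  ∑ i, k i ^ 2 / (2 * m i)

section KineticEnergy

variable {ι : Type*} [Fintype ι] {m : ι → ℝ}

theorem norm_sq_le_mul_kineticEnergy (hm : ∀ i, 0 < m i) (k : ι → ℝ) :
    ‖k‖ ^ 2 ≤ 2 * (∑ i, m i) * kineticEnergy m k := by
  have hterm (j : ι) : 0 ≤ k j ^ 2 / (2 * m j) := div_nonneg (sq_nonneg _) (by linarith [hm j])
  have hM : 0 ≤ ∑ j, m j := Finset.sum_nonneg fun j _ => (hm j).le
  have hT : 0 ≤ kineticEnergy m k := Finset.sum_nonneg fun j _ => hterm j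
  refine (Real.le_sqrt (norm_nonneg k) (by positivity)).1
    ((pi_norm_le_iff_of_nonneg (Real.sqrt_nonneg _)).2 fun i => ?_)
  rw [Real.norm_eq_abs]
  refine Real.abs_le_sqrt ?_
  have hmi : m i ≤ ∑ j, m j := Finset.single_le_sum (fun j _ => (hm j).le) (Finset.mem_univ i)
  have hki : k i ^ 2 / (2 * m i) ≤ kineticEnergy m k :=
    Finset.single_le_sum (f := fun j => k j ^ 2 / (2 * m j)) (fun j _ => hterm j)
      (Finset.mem_univ i)
  calc k i ^ 2 = 2 * m i * (k i ^ 2 / (2 * m i)) := by field_simp [(hm i).ne']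
    _ ≤ 2 * (∑ j, m j) * kineticEnergy m k := by gcongr; exact hterm i

variable (ι) in
theorem volume_sum_sq_le {R : ℝ} (hR : 0 ≤ R) :
    volume {x : ι → ℝ | ∑ i, x i ^ 2 ≤ R} = volume (closedBall (0 : EuclideanSpace ℝ ι) √R) := by
  rw [← (PiLp.volume_preserving_toLp ι).measure_preimage measurableSet_closedBall.nullMeasurableSet]
  congr 1
  ext x
  simp [EuclideanSpace.norm_eq, Real.sqrt_le_sqrt_iff hR]

theorem volume_kineticEnergy_le (hm : ∀ i, 0 < m i) {t : ℝ} (ht : 0 ≤ t) :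
    volume {k | kineticEnergy m k ≤ t}
      = ENNReal.ofReal (∏ i, √(2 * m i)) * volume (closedBall (0 : EuclideanSpace ℝ ι) √t) := by
  classical
  set f : (ι → ℝ) →ₗ[ℝ] ι → ℝ := Matrix.toLin' (Matrix.diagonal fun i => (√(2 * m i))⁻¹)
  have hdet : LinearMap.det f = (∏ i, √(2 * m i))⁻¹ := by
    simp only [f, LinearMap.det_toLin', Matrix.det_diagonal, Finset.prod_inv_distrib]
  have hpos : 0 < ∏ i, √(2 * m i) := Finset.prod_pos fun i _ => by have := hm i; positivity
  have hset : {k | kineticEnergy m k ≤ t} = f ⁻¹' {x | ∑ i, x i ^ 2 ≤ t} := by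
    ext k
    simp only [Set.mem_ofPred_eq, Set.mem_preimage, kineticEnergy, f, Matrix.toLin'_apply,
      Matrix.mulVec_diagonal]
    congr! 2 with i
    rw [mul_pow, inv_pow, Real.sq_sqrt (by linarith [hm i]), inv_mul_eq_div]
  rw [hset, Measure.addHaar_preimage_linearMap _ (hdet ▸ inv_ne_zero hpos.ne'), hdet, inv_inv,
    abs_of_pos hpos, volume_sum_sq_le ι ht]

end KineticEnergy

theorem volume_kineticEnergy_le_fin_three {m : Fin 3 → ℝ} (hm : ∀ i, 0 < m i) {t : ℝ}
    (ht : 0 ≤ t) :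
    volume {k | kineticEnergy m k ≤ t}
      = ENNReal.ofReal (4 * π / 3 * √(8 * ∏ i, m i) * t ^ (3 / 2 : ℝ)) := by
  have hprod : ∏ i, √(2 * m i) = √(8 * ∏ i, m i) := by
    rw [← Real.sqrt_prod _ fun i _ => by linarith [hm i], Finset.prod_mul_distrib]
    norm_num
  have hpow : √t ^ 3 = t ^ (3 / 2 : ℝ) := by
    rw [Real.sqrt_eq_rpow, ← rpow_natCast, ← rpow_mul ht]; norm_num
  rw [volume_kineticEnergy_le hm ht, EuclideanSpace.volume_closedBall_fin_three,
    ← ENNReal.ofReal_pow (Real.sqrt_nonneg t), ← ENNReal.ofReal_mul (by positivity),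
    ← ENNReal.ofReal_mul (by positivity), hprod, hpow]
  ring_nf

-- `s ρ^{2/3}` with `s = (6π²)^{2/3} / (2 M^{1/3})` is the free-electron Fermi energy: the level
-- at which the kinetic-energy ellipsoid, of volume `(4π/3) √(8M) t^{3/2}`, has volume `(2π)³ ρ`.
theorem volume_ellipsoid_at_fermiEnergy {M ρ : ℝ} (hM : 0 < M) (hρ : 0 ≤ ρ) :
    4 * π / 3 * √(8 * M) *
      ((6 * π ^ 2) ^ (2 / 3 : ℝ) / (2 * M ^ (1 / 3 : ℝ)) * ρ ^ (2 / 3 : ℝ)) ^ (3 / 2 : ℝ)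
      = (2 * π) ^ 3 * ρ := by
  set A := (6 * π ^ 2) ^ (2 / 3 : ℝ) / (2 * M ^ (1 / 3 : ℝ))
  have hA : 0 ≤ A := by positivity
  have hA3 : A ^ 3 = (6 * π ^ 2) ^ 2 / (8 * M) := by
    have h₁ : ((6 * π ^ 2) ^ (2 / 3 : ℝ)) ^ 3 = (6 * π ^ 2) ^ 2 := by
      rw [← rpow_natCast, ← rpow_mul (by positivity)]; norm_num
    have h₂ : (M ^ (1 / 3 : ℝ)) ^ 3 = M := by
      rw [← rpow_natCast, ← rpow_mul hM.le]; norm_num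
    rw [div_pow, mul_pow, h₁, h₂]; ring
  have hA32 : A ^ (3 / 2 : ℝ) = 6 * π ^ 2 / √(8 * M) := by
    rw [show (3 / 2 : ℝ) = (3 : ℕ) * (1 / 2) by norm_num, rpow_mul hA, rpow_natCast, hA3,
      ← Real.sqrt_eq_rpow, Real.sqrt_div' _ (by positivity), Real.sqrt_sq (by positivity)]
  rw [mul_rpow hA (by positivity), ← rpow_mul hρ, hA32]
  have : 0 < √(8 * M) := by positivity
  norm_num
  field_simp
  ring

section QuarticError

variable {V : Type*} [SeminormedAddCommGroup V] {q E : V → ℝ} {E₀ a C x : ℝ} {k : V}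

theorem apply_le_of_le_sub_sq (ha : 0 ≤ a) (hC : 0 ≤ C) (hqk : ‖k‖ ^ 2 ≤ a * q k)
    (hEk : |E k - (E₀ + q k)| ≤ C * ‖k‖ ^ 4) (hk : q k ≤ x - 4 * C * a ^ 2 * x ^ 2) :
    E k ≤ E₀ + x := by
  have hqx : q k ≤ x :=
    hk.trans (by nlinarith [mul_nonneg (mul_nonneg hC (sq_nonneg a)) (sq_nonneg x)])
  have hnorm : ‖k‖ ^ 2 ≤ a * x := hqk.trans (by gcongr)
  have hquartic : ‖k‖ ^ 4 ≤ (a * x) ^ 2 := by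
    rw [show ‖k‖ ^ 4 = (‖k‖ ^ 2) ^ 2 by ring]; gcongr
  nlinarith [(abs_le.1 hEk).2, mul_le_mul_of_nonneg_left hquartic hC, sq_nonneg (a * x)]

theorem le_add_sq_of_apply_le (ha : 0 ≤ a) (hC : 0 ≤ C) (hqk : ‖k‖ ^ 2 ≤ a * q k)
    (hEk : |E k - (E₀ + q k)| ≤ C * ‖k‖ ^ 4) (hsmall : a * C * ‖k‖ ^ 2 ≤ 1 / 2)
    (hk : E k ≤ E₀ + x) :
    q k ≤ x + 4 * C * a ^ 2 * x ^ 2 := by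
  have hqx : q k ≤ x + C * ‖k‖ ^ 4 := by linarith [(abs_le.1 hEk).1]
  -- `a C ‖k‖² ≤ 1/2` absorbs the quartic error: `‖k‖² ≤ a x + ‖k‖² / 2`.
  have hnorm : ‖k‖ ^ 2 ≤ 2 * a * x := by
    have := mul_le_mul_of_nonneg_left hqx ha
    nlinarith [mul_le_mul_of_nonneg_right hsmall (sq_nonneg ‖k‖)]
  have hquartic : ‖k‖ ^ 4 ≤ (2 * a * x) ^ 2 := by
    rw [show ‖k‖ ^ 4 = (‖k‖ ^ 2) ^ 2 by ring]; gcongr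
  nlinarith [mul_le_mul_of_nonneg_left hquartic hC]

theorem eventually_sublevel_sandwich {Q : Set V} (ha : 0 ≤ a) (hq : ∀ k, ‖k‖ ^ 2 ≤ a * q k)
    (hQ : Q ∈ 𝓝 0) (hmin : ∀ r > (0 : ℝ), ∃ ε > (0 : ℝ), ∀ k ∈ Q, r ≤ ‖k‖ → E₀ + ε ≤ E k)
    (hquad : (fun k => E k - (E₀ + q k)) =O[𝓝 0] fun k => ‖k‖ ^ 4) :
    ∃ K, 0 ≤ K ∧ ∀ᶠ x in 𝓝 0,
      {k | q k ≤ x - K * x ^ 2} ⊆ {k ∈ Q | E k ≤ E₀ + x} ∧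
      {k ∈ Q | E k ≤ E₀ + x} ⊆ {k | q k ≤ x + K * x ^ 2} := by
  obtain ⟨C, hC, hCE⟩ := hquad.exists_pos
  have hnear : ∀ᶠ k in 𝓝 (0 : V),
      k ∈ Q ∧ a * C * ‖k‖ ^ 2 ≤ 1 / 2 ∧ |E k - (E₀ + q k)| ≤ C * ‖k‖ ^ 4 := by
    refine (show ∀ᶠ k in 𝓝 (0 : V), k ∈ Q from hQ).and (Eventually.and ?_ ?_)
    · have : Tendsto (fun k : V => a * C * ‖k‖ ^ 2) (𝓝 0) (𝓝 0) := by
        simpa using (tendsto_norm_zero.pow 2).const_mul (a * C)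
      exact this.eventually_le_const (by norm_num)
    · filter_upwards [hCE.bound] with k hk
      simpa using hk
  obtain ⟨r, hr, hball⟩ := Metric.eventually_nhds_iff.1 hnear
  obtain ⟨ε, hε, hεE⟩ := hmin r hr
  have hax : Tendsto (fun x : ℝ => a * x) (𝓝 0) (𝓝 0) :=
    (continuous_const_mul a).tendsto' 0 0 (mul_zero a)
  have hsmall : ∀ᶠ x in 𝓝 (0 : ℝ), x < ε ∧ a * x < r ^ 2 :=
    (eventually_lt_nhds hε).and (hax.eventually_lt_const (pow_pos hr 2))
  refine ⟨4 * C * a ^ 2, by positivity, ?_⟩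
  filter_upwards [hsmall] with x ⟨hxε, hxr⟩
  refine ⟨fun k hk => ?_, fun k ⟨hkQ, hk⟩ => ?_⟩
  · have hkr : ‖k‖ < r := by
      refine lt_of_pow_lt_pow_left₀ 2 hr.le ((hq k).trans_lt (lt_of_le_of_lt ?_ hxr))
      gcongr
      exact hk.trans (by nlinarith [mul_nonneg (mul_nonneg hC.le (sq_nonneg a)) (sq_nonneg x)])
    obtain ⟨hkQ, -, hEk⟩ := hball (by simpa using hkr)
    exact ⟨hkQ, apply_le_of_le_sub_sq ha hC.le (hq k) hEk hk⟩
  · have hkr : ‖k‖ < r := by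
      by_contra! h
      linarith [hεE k hkQ h]
    obtain ⟨-, hkC, hEk⟩ := hball (by simpa using hkr)
    exact le_add_sq_of_apply_le ha hC.le (hq k) hEk hkC hk

end QuarticError

theorem mem_Icc_of_volume_sublevel_sandwich {α : Type*} [MeasurableSpace α] {μ : Measure α}
    {q : α → ℝ} {S : Set α} {c p t₁ t₂ u : ℝ} (hc : 0 < c) (hp : 0 < p)
    (hvol : ∀ t, 0 ≤ t → μ {k | q k ≤ t} = ENNReal.ofReal (c * t ^ p))
    (ht₁ : 0 ≤ t₁) (ht₂ : 0 ≤ t₂) (hu : 0 ≤ u)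
    (h₁ : {k | q k ≤ t₁} ⊆ S) (h₂ : S ⊆ {k | q k ≤ t₂}) (hS : (μ S).toReal = c * u ^ p) :
    u ∈ Set.Icc t₁ t₂ := by
  have hvol' (t : ℝ) (ht : 0 ≤ t) : (μ {k | q k ≤ t}).toReal = c * t ^ p := by
    rw [hvol t ht, ENNReal.toReal_ofReal (by positivity)]
  have hfin : μ {k | q k ≤ t₂} ≠ ⊤ := by rw [hvol t₂ ht₂]; exact ENNReal.ofReal_ne_top
  have hlow := ENNReal.toReal_mono (ne_top_of_le_ne_top hfin (measure_mono h₂)) (measure_mono h₁)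
  have hupp := ENNReal.toReal_mono hfin (measure_mono h₂)
  rw [hvol' t₁ ht₁, hS] at hlow
  rw [hvol' t₂ ht₂, hS] at hupp
  exact ⟨(rpow_le_rpow_iff ht₁ hu hp).1 (le_of_mul_le_mul_left hlow hc),
    (rpow_le_rpow_iff hu ht₂ hp).1 (le_of_mul_le_mul_left hupp hc)⟩

theorem abs_sub_le_of_sub_sq_le_of_le_add_sq {K x u : ℝ} (hK : 0 ≤ K) (hx : 0 ≤ x)
    (hKx : K * x ≤ 1 / 2) (h₁ : x - K * x ^ 2 ≤ u) (h₂ : u ≤ x + K * x ^ 2) :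
    |x - u| ≤ 4 * K * u ^ 2 := by
  have hx2u : x ≤ 2 * u := by nlinarith
  calc |x - u| ≤ K * x ^ 2 := abs_le.2 ⟨by linarith, by linarith⟩
    _ ≤ K * (2 * u) ^ 2 := by gcongr
    _ = 4 * K * u ^ 2 := by ring

theorem stmt_15_general (m₁ m₂ m₃ : ℝ) (hm₁ : 0 < m₁) (hm₂ : 0 < m₂) (hm₃ : 0 < m₃)
    (E : (Fin 3 → ℝ) → ℝ) (E₀ : ℝ)
    (Q : Set (Fin 3 → ℝ)) (hQ : Q = Set.Icc (fun _ => -π) (fun _ => π))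
    (hmin : ∀ r > (0 : ℝ), ∃ ε > (0 : ℝ), ∀ k ∈ Q, r ≤ ‖k‖ → E₀ + ε ≤ E k)
    (hquad : (fun k : Fin 3 → ℝ =>
        E k - (E₀ + (1 / 2) * ((k 0) ^ 2 / m₁ + (k 1) ^ 2 / m₂ + (k 2) ^ 2 / m₃)))
      =O[nhds 0] fun k => ‖k‖ ^ 4)
    (ρ₁ : ℝ) (hρ₁ : 0 < ρ₁) (Δ : ℝ → ℝ)
    (hΔpos : ∀ ρ₀ ∈ Set.Ioo (0 : ℝ) ρ₁, 0 < Δ ρ₀)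
    (hΔeq : ∀ ρ₀ ∈ Set.Ioo (0 : ℝ) ρ₁,
      ((2 * π) ^ 3)⁻¹ * (volume {k ∈ Q | E k ≤ E₀ + Δ ρ₀}).toReal = ρ₀)
    (hΔ0 : Tendsto Δ (nhdsWithin 0 (Set.Ioi 0)) (nhds 0))
    (s : ℝ) (hs : s = (6 * π ^ 2) ^ ((2 : ℝ) / 3) / (2 * (m₁ * m₂ * m₃) ^ ((1 : ℝ) / 3))) :
    (fun ρ₀ : ℝ => Δ ρ₀ - s * ρ₀ ^ ((2 : ℝ) / 3))
      =O[nhdsWithin 0 (Set.Ioi 0)] fun ρ₀ => ρ₀ ^ ((4 : ℝ) / 3) := by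
  set m : Fin 3 → ℝ := ![m₁, m₂, m₃]
  have hm : ∀ i, 0 < m i := by intro i; fin_cases i <;> assumption
  have hkin (k : Fin 3 → ℝ) :
      (1 / 2) * ((k 0) ^ 2 / m₁ + (k 1) ^ 2 / m₂ + (k 2) ^ 2 / m₃) = kineticEnergy m k := by
    simp only [kineticEnergy, Fin.sum_univ_three, m, Matrix.cons_val_zero, Matrix.cons_val_one,
      Matrix.cons_val_two, Matrix.head_cons, Matrix.tail_cons]
    ring
  have hM : ∏ i, m i = m₁ * m₂ * m₃ := by simp [m, Fin.prod_univ_three, mul_assoc]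
  have hQ0 : Q ∈ 𝓝 0 := hQ ▸ pi_Icc_mem_nhds (fun _ => neg_lt_zero.2 pi_pos) fun _ => pi_pos
  obtain ⟨K, hK, hsand⟩ :=
    eventually_sublevel_sandwich (mul_nonneg zero_le_two (Finset.sum_nonneg fun i _ => (hm i).le))
    (norm_sq_le_mul_kineticEnergy hm) hQ0 hmin (by simpa only [hkin] using hquad)
  refine isBigO_iff.2 ⟨4 * K * s ^ 2, ?_⟩
  filter_upwards [Ioo_mem_nhdsGT hρ₁, hΔ0.eventually hsand,
    (hΔ0.const_mul K).eventually_le_const (show K * 0 < 1 / 2 by norm_num)]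
    with ρ hρ ⟨h₁, h₂⟩ hKΔ
  have hρ0 : 0 < ρ := hρ.1
  have hΔρ := hΔpos ρ hρ
  have hu : s * ρ ^ (2 / 3 : ℝ) ∈ Set.Icc (Δ ρ - K * Δ ρ ^ 2) (Δ ρ + K * Δ ρ ^ 2) := by
    refine mem_Icc_of_volume_sublevel_sandwich (by rw [hM]; positivity)
      (by norm_num : (0 : ℝ) < 3 / 2) (fun t ht => volume_kineticEnergy_le_fin_three hm ht) (by nlinarith) (by positivity)
      (by rw [hs]; positivity) h₁ h₂ ?_
    rw [hM, hs, volume_ellipsoid_at_fermiEnergy (by positivity) hρ0.le]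
    exact (inv_mul_eq_iff_eq_mul₀ (by positivity)).1 (hΔeq ρ hρ)
  rw [Real.norm_eq_abs, Real.norm_eq_abs, abs_of_nonneg (rpow_nonneg hρ0.le _)]
  calc |Δ ρ - s * ρ ^ (2 / 3 : ℝ)| ≤ 4 * K * (s * ρ ^ (2 / 3 : ℝ)) ^ 2 :=
        abs_sub_le_of_sub_sq_le_of_le_add_sq hK hΔρ.le hKΔ hu.1 hu.2
    _ = 4 * K * s ^ 2 * ρ ^ (4 / 3 : ℝ) := by
        rw [mul_pow, ← rpow_mul_natCast hρ0.le]; norm_num [mul_assoc]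

/-- Small-density expansion of the Fermi energy measured from the band bottom:
if `(2π)⁻³ vol{k ∈ Q : E(k) ≤ E₀ + Δ(ρ₀)} = ρ₀` and `Δ(ρ₀) → 0`, then
`Δ(ρ₀) = s ρ₀^{2/3} + O(ρ₀^{4/3})` with `s = (6π²)^{2/3} / (2 (m₁m₂m₃)^{1/3})`. -/
theorem stmt_15 (m₁ m₂ m₃ : ℝ) (hm₁ : 0 < m₁) (hm₂ : 0 < m₂) (hm₃ : 0 < m₃)
    (E : (Fin 3 → ℝ) → ℝ) (E₀ : ℝ)
    (Q : Set (Fin 3 → ℝ)) (hQ : Q = Set.Icc (fun _ => -π) (fun _ => π))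
    (hcont : ContinuousOn E Q) (hE0 : E 0 = E₀)
    (hmin : ∀ r > (0 : ℝ), ∃ ε > (0 : ℝ), ∀ k ∈ Q, r ≤ ‖k‖ → E₀ + ε ≤ E k)
    (hquad : (fun k : Fin 3 → ℝ =>
        E k - (E₀ + (1 / 2) * ((k 0) ^ 2 / m₁ + (k 1) ^ 2 / m₂ + (k 2) ^ 2 / m₃)))
      =O[nhds 0] fun k => ‖k‖ ^ 4)
    (ρ₁ : ℝ) (hρ₁ : 0 < ρ₁) (Δ : ℝ → ℝ)
    (hΔpos : ∀ ρ₀ ∈ Set.Ioo (0 : ℝ) ρ₁, 0 < Δ ρ₀)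
    (hΔeq : ∀ ρ₀ ∈ Set.Ioo (0 : ℝ) ρ₁,
      ((2 * π) ^ 3)⁻¹ * (volume {k ∈ Q | E k ≤ E₀ + Δ ρ₀}).toReal = ρ₀)
    (hΔ0 : Tendsto Δ (nhdsWithin 0 (Set.Ioi 0)) (nhds 0))
    (s : ℝ) (hs : s = (6 * π ^ 2) ^ ((2 : ℝ) / 3) / (2 * (m₁ * m₂ * m₃) ^ ((1 : ℝ) / 3))) :
    (fun ρ₀ : ℝ => Δ ρ₀ - s * ρ₀ ^ ((2 : ℝ) / 3))
      =O[nhdsWithin 0 (Set.Ioi 0)] fun ρ₀ => ρ₀ ^ ((4 : ℝ) / 3) :=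
  stmt_15_general m₁ m₂ m₃ hm₁ hm₂ hm₃ E E₀ Q hQ hmin hquad ρ₁ hρ₁ Δ hΔpos hΔeq hΔ0 s hs
end
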